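/- arXiv:1105.4576 — 5 statements merged into one kernel-verified Lean document; each statement's English description precedes it below -/
import Mathlib

section
/- Let p be a prime and r a positive multiple of p. If (-1)^w * C(r-1, w) ≡ 1 (mod p) for every integer w with r/2 ≤ w ≤ r-1, then C(r, k) ≡ 0 (mod p) for all 1 ≤ k ≤ r-1, and hence r is a power of p. -/
/-!
By Pascal's rule, two consecutive values `(-1) ^ (k - 1)`, `(-1) ^ k` in the upper half of row
`r - 1` cancel in `C(r, k) = C(r - 1, k - 1) + C(r - 1, k)`, and symmetry transfers this to the
lower half. The one coefficient left over is the central one when `r` is even; then `w = r - 1`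
gives `(-1) ^ (r - 1) = 1` with `r - 1` odd, so `p = 2`, and central binomial coefficients are even.
That `r` is a power of `p` is the Lucas-theorem characterisation of prime powers.
-/

section

variable {R : Type*} [CommRing R]

lemma eq_neg_one_pow_of_neg_one_pow_mul_eq_one {a : R} {w : ℕ} (h : (-1) ^ w * a = 1) :
    a = (-1) ^ w := by
  calc a = ((-1) ^ w * (-1) ^ w) * a := by rw [← mul_pow, neg_one_mul, neg_neg, one_pow, one_mul]
    _ = (-1) ^ w := by rw [mul_assoc, h, mul_one]

lemma Nat.cast_choose_succ_succ_eq_zero {n k : ℕ} (h₁ : (n.choose k : R) = (-1) ^ k)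
    (h₂ : (n.choose (k + 1) : R) = (-1) ^ (k + 1)) : ((n + 1).choose (k + 1) : R) = 0 := by
  rw [Nat.choose_succ_succ, Nat.cast_add, h₁, h₂, pow_succ]
  ring

lemma two_eq_zero_of_neg_one_pow_eq_one {n : ℕ} (hn : Odd n) (h : (-1 : R) ^ n = 1) :
    (2 : R) = 0 := by
  rw [hn.neg_one_pow] at h
  linear_combination -h

lemma Nat.cast_centralBinom_eq_zero (h2 : (2 : R) = 0) {k : ℕ} (hk : 0 < k) :
    (k.centralBinom : R) = 0 := by
  obtain ⟨c, hc⟩ := Nat.two_dvd_centralBinom_of_one_le hk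
  rw [hc, Nat.cast_mul, Nat.cast_ofNat, h2, zero_mul]

theorem Nat.cast_choose_eq_zero_of_cast_choose_pred_eq_neg_one_pow {r : ℕ}
    (h : ∀ w, r / 2 ≤ w → w ≤ r - 1 → ((r - 1).choose w : R) = (-1) ^ w)
    {k : ℕ} (hk₁ : 1 ≤ k) (hk₂ : k ≤ r - 1) : (r.choose k : R) = 0 := by
  obtain ⟨n, rfl⟩ : ∃ n, r = n + 1 := ⟨r - 1, by omega⟩
  simp only [Nat.add_sub_cancel] at h hk₂
  have upper : ∀ j, (n + 1) / 2 ≤ j → j < n → ((n + 1).choose (j + 1) : R) = 0 := fun j hj₁ hj₂ =>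
    Nat.cast_choose_succ_succ_eq_zero (h j hj₁ hj₂.le) (h (j + 1) (by omega) hj₂)
  obtain ⟨j, rfl⟩ : ∃ j, k = j + 1 := ⟨k - 1, by omega⟩
  by_cases hj : (n + 1) / 2 ≤ j
  · exact upper j hj (by omega)
  by_cases hj' : (n + 1) / 2 ≤ n - (j + 1)
  · rw [← Nat.choose_symm (by omega), show n + 1 - (j + 1) = n - (j + 1) + 1 by omega]
    exact upper _ hj' (by omega)
  have h2 : (2 : R) = 0 :=
    two_eq_zero_of_neg_one_pow_eq_one (n := n) ⟨j, by omega⟩ <| by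
      rw [← h n (by omega) le_rfl, Nat.choose_self, Nat.cast_one]
  rw [show n + 1 = 2 * (j + 1) by omega, ← Nat.centralBinom_eq_two_mul_choose]
  exact Nat.cast_centralBinom_eq_zero h2 j.succ_pos

end

theorem stmt_1_general (p r : ℕ) (hp : p.Prime) (hr : 0 < r)
    (h : ∀ w : ℕ, r / 2 ≤ w → w ≤ r - 1 →
      ((-1) ^ w * (Nat.choose (r - 1) w : ZMod p)) = 1) :
    (∀ k : ℕ, 1 ≤ k → k ≤ r - 1 → ((Nat.choose r k : ZMod p)) = 0) ∧
      ∃ m : ℕ, r = p ^ m := by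
  have : Fact p.Prime := ⟨hp⟩
  have hchoose : ∀ k, 1 ≤ k → k ≤ r - 1 → (r.choose k : ZMod p) = 0 := fun _ =>
    Nat.cast_choose_eq_zero_of_cast_choose_pred_eq_neg_one_pow fun w hw₁ hw₂ =>
      eq_neg_one_pow_of_neg_one_pow_mul_eq_one (h w hw₁ hw₂)
  refine ⟨hchoose, _, Choose.eq_pow_multiplicity_of_choose_modEq_zero_nat hr fun k hk => ?_⟩
  rw [Finset.mem_Icc] at hk
  exact Nat.modEq_zero_iff_dvd.mpr <| (ZMod.natCast_eq_zero_iff _ _).mp (hchoose k hk.1 hk.2)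

/-- Let `p` be a prime and `r` a positive multiple of `p`.  If
`(-1)^w * C(r-1, w) ≡ 1 (mod p)` for every `w` with `r/2 ≤ w ≤ r-1`, then
`C(r, k) ≡ 0 (mod p)` for all `1 ≤ k ≤ r-1`, and hence `r` is a power of `p`. -/
theorem stmt_1 (p r : ℕ) (hp : p.Prime) (hr : 0 < r) (hpr : p ∣ r)
    (h : ∀ w : ℕ, r / 2 ≤ w → w ≤ r - 1 →
      ((-1) ^ w * (Nat.choose (r - 1) w : ZMod p)) = 1) :
    (∀ k : ℕ, 1 ≤ k → k ≤ r - 1 → ((Nat.choose r k : ZMod p)) = 0) ∧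
      ∃ m : ℕ, r = p ^ m :=
  stmt_1_general p r hp hr h
end

section
/- For all integers s, t ≥ 1, the number m_{s,t} := (1/(s+t)) * Σ_{d | gcd(s,t)} μ(d) * ((s+t)/d)! / ((s/d)! * (t/d)!) is a positive integer. -/
/-!
Let `n = s + t` and let `ℤ/n` act by translation on its `s`-element subsets. A subset is
invariant under translation by `m ∣ n` exactly when it is pulled back from an `(s/d)`-subset of
`ℤ/m`, `d = n/m`, so there are `C(m, s/d)` of them if `d ∣ s` and none otherwise. Möbius
inversion over the period then shows that `n * m_{s,t}` is the number of subsets with trivial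
stabilizer. Translation acts freely on these, so `n` divides their number, and the interval
`{0, …, s-1}` is one of them, so the quotient `m_{s,t}` is a positive integer.
-/

open Finset Pointwise AddAction

namespace QuotientAddGroup

variable {G : Type*} [AddCommGroup G] [Fintype G] (H : AddSubgroup G) [DecidableEq (G ⧸ H)]

theorem card_filter_mk_mem (T : Finset (G ⧸ H)) :
    #{x : G | (x : G ⧸ H) ∈ T} = Nat.card H * #T := by
  classical
  have := Nat.card_congr (preimageMkEquivAddSubgroupProdSet H (T : Set (G ⧸ H)))
  rw [Nat.card_prod, Nat.card_coe_set_eq, Nat.card_coe_set_eq, Set.ncard_coe_finset,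
    Set.ncard_eq_toFinset_card'] at this
  simpa using this

theorem filter_mk_mem_image_eq [DecidableEq G] {S : Finset G}
    (hS : H ≤ stabilizer G S) : ({x : G | (x : G ⧸ H) ∈ S.image (↑)} : Finset G) = S := by
  ext x
  simp only [mem_filter, mem_univ, true_and, mem_image, QuotientAddGroup.eq]
  refine ⟨fun ⟨y, hy, hyx⟩ => ?_, fun hx => ⟨x, hx, by simp⟩⟩
  rw [← hS hyx]
  exact Finset.mem_vadd_finset.2 ⟨y, hy, by simp⟩

theorem le_stabilizer_filter_mk_mem [DecidableEq G] (T : Finset (G ⧸ H)) :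
    H ≤ stabilizer G ({x : G | (x : G ⧸ H) ∈ T} : Finset G) := by
  intro h hh
  rw [mem_stabilizer_iff]
  ext x
  simp only [mem_vadd_finset, mem_filter, mem_univ, true_and, vadd_eq_add]
  constructor
  · rintro ⟨y, hy, rfl⟩
    simpa [mk_add, (eq_zero_iff h).2 hh] using hy
  · intro hx
    refine ⟨-h + x, ?_, by abel⟩
    simpa [mk_add, (eq_zero_iff h).2 hh] using hx

end QuotientAddGroup

theorem card_filter_mul_card_eq {α : Type*} [Fintype α] {c : ℕ} (hc : c ≠ 0) (s : ℕ) :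
    #{T : Finset α | c * #T = s} = if c ∣ s then (Fintype.card α).choose (s / c) else 0 := by
  split_ifs with hcs
  · rw [← card_univ, ← card_powersetCard]
    congr 1
    ext T
    simp [Nat.eq_div_iff_mul_eq_left hc hcs, mul_comm, eq_comm]
  · rw [card_eq_zero, filter_eq_empty_iff]
    rintro T - rfl
    exact hcs (dvd_mul_right c _)

theorem card_filter_le_stabilizer {G : Type*} [AddCommGroup G] [Fintype G] [DecidableEq G]
    (H : AddSubgroup G) [DecidablePred fun S : Finset G => H ≤ stabilizer G S] (s : ℕ) :
    #{S ∈ powersetCard s (univ : Finset G) | H ≤ stabilizer G S} =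
      if Nat.card H ∣ s then (Nat.card (G ⧸ H)).choose (s / Nat.card H) else 0 := by
  classical
  rw [Nat.card_eq_fintype_card (α := G ⧸ H), ← card_filter_mul_card_eq Nat.card_pos.ne' s]
  refine card_nbij' (fun S => S.image (↑)) (fun T => ({x : G | (x : G ⧸ H) ∈ T} : Finset G))
    ?_ ?_ ?_ ?_
  · intro S hS
    simp only [coe_filter, mem_powersetCard_univ, Set.mem_ofPred_eq, mem_univ, true_and] at hS ⊢
    rw [← QuotientAddGroup.card_filter_mk_mem, QuotientAddGroup.filter_mk_mem_image_eq H hS.2, hS.1]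
  · intro T hT
    simp only [coe_filter, mem_powersetCard_univ, Set.mem_ofPred_eq, mem_univ, true_and] at hT ⊢
    exact ⟨(QuotientAddGroup.card_filter_mk_mem H T).trans hT,
      QuotientAddGroup.le_stabilizer_filter_mk_mem H T⟩
  · intro S hS
    simp only [coe_filter, mem_powersetCard_univ, Set.mem_ofPred_eq] at hS
    exact QuotientAddGroup.filter_mk_mem_image_eq H hS.2
  · intro T _
    ext q
    obtain ⟨x, rfl⟩ := QuotientAddGroup.mk_surjective q
    simpa using ⟨fun ⟨y, hy, hyx⟩ => hyx ▸ hy, fun hx => ⟨x, hx, rfl⟩⟩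

theorem card_filter_dvd_eq_sum_card_filter_eq {α : Type*} (X : Finset α) (φ : α → ℕ) {k : ℕ}
    (hk : k ≠ 0) :
    #{x ∈ X | φ x ∣ k} = ∑ e ∈ k.divisors, #{x ∈ X | φ x = e} := by
  rw [card_eq_sum_card_fiberwise (f := φ) (t := k.divisors)]
  · refine sum_congr rfl fun e he => ?_
    rw [filter_filter]
    refine congrArg card (filter_congr fun x _ => ?_)
    exact ⟨And.right, fun h => ⟨h ▸ Nat.dvd_of_mem_divisors he, h⟩⟩
  · intro x hx
    exact Nat.mem_divisors.2 ⟨(mem_filter.1 hx).2, hk⟩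

open ArithmeticFunction ArithmeticFunction.Moebius in
theorem card_filter_eq_eq_sum_moebius {α : Type*} (X : Finset α) (φ : α → ℕ) {k : ℕ}
    (hk : 0 < k) :
    (#{x ∈ X | φ x = k} : ℤ) = ∑ d ∈ k.divisors, μ d * #{x ∈ X | φ x ∣ k / d} := by
  have hsum : ∀ j > 0, ∑ e ∈ j.divisors, (#{x ∈ X | φ x = e} : ℤ) = #{x ∈ X | φ x ∣ j} :=
    fun j hj => by exact_mod_cast (card_filter_dvd_eq_sum_card_filter_eq X φ hj.ne').symm
  rw [← sum_eq_iff_sum_mul_moebius_eq.1 hsum k hk]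
  simp only [Int.cast_id]
  exact Nat.sum_divisorsAntidiagonal fun a b => μ a * (#{x ∈ X | φ x ∣ b} : ℤ)

theorem AddAction.card_dvd_card_of_stabilizer_eq_bot {G X : Type*} [AddGroup G] [AddAction G X]
    (h : ∀ x : X, stabilizer G x = ⊥) : Nat.card G ∣ Nat.card X :=
  ⟨_, (Nat.card_congr (selfEquivOrbitsQuotientProd h)).trans
    ((Nat.card_prod _ _).trans (mul_comm _ _))⟩

theorem card_dvd_card_filter_stabilizer_eq_bot {G : Type*} [AddCommGroup G] [Fintype G]
    [DecidableEq G] (s : ℕ) [DecidablePred fun S : Finset G => stabilizer G S = ⊥] :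
    Fintype.card G ∣ #{S ∈ powersetCard s (univ : Finset G) | stabilizer G S = ⊥} := by
  let free : SubAddAction G (Finset G) :=
    { carrier := {S | #S = s ∧ stabilizer G S = ⊥}
      vadd_mem' := fun a S hS =>
        ⟨(card_vadd_finset a S).trans hS.1, (stabilizer_vadd_eq_right a S).trans hS.2⟩ }
  have hfree : ∀ S : free, stabilizer G S = ⊥ := fun S => by
    rw [← S.2.2]
    ext a
    simp only [mem_stabilizer_iff, Subtype.ext_iff, SubAddAction.val_vadd]
  have hcard : Nat.card free = #{S ∈ powersetCard s (univ : Finset G) | stabilizer G S = ⊥} := by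
    rw [← Nat.card_eq_finsetCard]
    refine Nat.card_congr (Equiv.subtypeEquivRight fun S => ?_)
    rw [mem_filter, mem_powersetCard_univ]
    rfl
  simpa [hcard] using card_dvd_card_of_stabilizer_eq_bot hfree

theorem AddAction.period_one_dvd_iff_natCast_mem_stabilizer {R α : Type*} [AddGroupWithOne R]
    [AddAction R α] (x : α) (m : ℕ) : period (1 : R) x ∣ m ↔ (m : R) ∈ stabilizer R x := by
  rw [mem_stabilizer_iff, ← nsmul_one, nsmul_vadd_eq_iff_period_dvd]

theorem AddAction.period_one_eq_iff_stabilizer_eq_bot {n : ℕ} [NeZero n] {α : Type*}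
    [AddAction (ZMod n) α] (x : α) : period (1 : ZMod n) x = n ↔ stabilizer (ZMod n) x = ⊥ := by
  constructor
  · intro h
    refine (AddSubgroup.eq_bot_iff_forall _).2 fun a ha => ?_
    rw [← ZMod.natCast_zmod_val a, ← period_one_dvd_iff_natCast_mem_stabilizer, h] at ha
    rw [← ZMod.natCast_zmod_val a, ZMod.natCast_eq_zero_iff]
    exact ha
  · intro h
    refine Nat.dvd_antisymm ((period_one_dvd_iff_natCast_mem_stabilizer x n).2 (by simp)) ?_
    have := (period_one_dvd_iff_natCast_mem_stabilizer (R := ZMod n) x _).1 dvd_rfl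
    rwa [h, AddSubgroup.mem_bot, ZMod.natCast_eq_zero_iff] at this

-- A translation fixing `S` also fixes `{y ∈ S | y + g ∉ S}`, hence its only point `x`.
theorem stabilizer_eq_bot_of_filter_add_notMem_eq_singleton {G : Type*} [AddCommGroup G]
    [DecidableEq G] {S : Finset G} {g x : G} (hx : {y ∈ S | y + g ∉ S} = {x}) :
    stabilizer G S = ⊥ := by
  replace hx : ∀ y, y ∈ S ∧ y + g ∉ S ↔ y = x := fun y => by
    simpa using Finset.ext_iff.1 hx y
  refine (AddSubgroup.eq_bot_iff_forall _).2 fun a ha => ?_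
  have hmem : ∀ y, a + y ∈ S ↔ y ∈ S := fun y => by
    rw [mem_stabilizer_iff] at ha
    conv_lhs => rw [← ha]
    exact vadd_mem_vadd_finset_iff a
  have hax : a + x = x := (hx _).1 <| by
    rw [hmem, add_assoc, hmem]
    exact (hx x).2 rfl
  simpa using hax

theorem ZMod.card_filter_val_lt {n s : ℕ} [NeZero n] (hsn : s ≤ n) :
    #{y : ZMod n | y.val < s} = s := by
  conv_rhs => rw [← card_range s]
  refine card_nbij' ZMod.val Nat.cast (fun y hy => ?_) (fun k hk => ?_) (fun y _ => ?_)
    (fun k hk => ?_)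
  · simpa using hy
  · simp only [coe_range, Set.mem_Iio] at hk
    simpa [ZMod.val_natCast_of_lt (hk.trans_le hsn)] using hk
  · exact ZMod.natCast_zmod_val y
  · simp only [coe_range, Set.mem_Iio] at hk
    exact ZMod.val_natCast_of_lt (hk.trans_le hsn)

theorem ZMod.val_lt_and_not_val_add_one_lt_iff {n s : ℕ} [NeZero n] (hs : 0 < s) (hsn : s < n)
    (y : ZMod n) : y.val < s ∧ ¬ (y + 1).val < s ↔ y = ((s - 1 : ℕ) : ZMod n) := by
  constructor
  · rintro ⟨hy, hy1⟩
    have : (y + 1).val = y.val + 1 := by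
      rw [← ZMod.natCast_zmod_val y, ← Nat.cast_add_one, ZMod.val_natCast_of_lt (by omega),
        ZMod.val_natCast_of_lt (by omega)]
    rw [← ZMod.natCast_zmod_val y]
    congr 1
    omega
  · rintro rfl
    rw [← Nat.cast_add_one, Nat.sub_add_cancel hs, ZMod.val_natCast_of_lt (by omega),
      ZMod.val_natCast_of_lt hsn]
    omega

theorem Nat.filter_dvd_divisors_add (s t : ℕ) :
    (s + t).divisors.filter (· ∣ s) = (Nat.gcd s t).divisors := by
  ext d
  simp only [mem_filter, Nat.mem_divisors, Nat.dvd_gcd_iff, ne_eq, Nat.gcd_eq_zero_iff]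
  constructor
  · rintro ⟨⟨hst, h0⟩, hds⟩
    exact ⟨⟨hds, (Nat.dvd_add_right hds).1 hst⟩, by omega⟩
  · rintro ⟨⟨hds, hdt⟩, h0⟩
    exact ⟨⟨dvd_add hds hdt, by omega⟩, hds⟩

namespace ZMod

variable {n : ℕ} [NeZero n]

theorem card_filter_period_one_dvd {m d : ℕ} (hmd : m * d = n) (s : ℕ) :
    #{S ∈ powersetCard s (univ : Finset (ZMod n)) | period (1 : ZMod n) S ∣ m} =
      if d ∣ s then m.choose (s / d) else 0 := by
  classical
  have hm : m ≠ 0 := left_ne_zero_of_mul (hmd ▸ NeZero.ne n)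
  have hd : d ≠ 0 := right_ne_zero_of_mul (hmd ▸ NeZero.ne n)
  have hH : Nat.card (AddSubgroup.zmultiples (m : ZMod n)) = d := by
    rw [Nat.card_zmultiples, ZMod.addOrderOf_coe m (NeZero.ne n), ← hmd,
      Nat.gcd_mul_right_left, Nat.mul_div_cancel_left _ (Nat.pos_of_ne_zero hm)]
  have hQ : Nat.card (ZMod n ⧸ AddSubgroup.zmultiples (m : ZMod n)) = m := by
    have := AddSubgroup.card_eq_card_quotient_mul_card_addSubgroup
      (AddSubgroup.zmultiples (m : ZMod n))
    rw [Nat.card_zmod, hH] at this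
    exact Nat.eq_of_mul_eq_mul_right (Nat.pos_of_ne_zero hd) (this.symm.trans hmd.symm)
  have hcount := card_filter_le_stabilizer (AddSubgroup.zmultiples (m : ZMod n)) s
  rw [hH, hQ] at hcount
  rw [← hcount]
  exact congrArg Finset.card <| filter_congr fun S _ => by
    rw [period_one_dvd_iff_natCast_mem_stabilizer, AddSubgroup.zmultiples_le]

open ArithmeticFunction ArithmeticFunction.Moebius in
theorem card_filter_period_one_eq (s : ℕ) :
    (#{S ∈ powersetCard s (univ : Finset (ZMod n)) | period (1 : ZMod n) S = n} : ℤ) =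
      ∑ d ∈ n.divisors, if d ∣ s then μ d * ((n / d).choose (s / d) : ℤ) else 0 := by
  rw [card_filter_eq_eq_sum_moebius _ _ (NeZero.pos n)]
  refine sum_congr rfl fun d hd => ?_
  rw [card_filter_period_one_dvd (Nat.div_mul_cancel (Nat.dvd_of_mem_divisors hd))]
  split_ifs <;> simp

theorem dvd_card_filter_period_one_eq (s : ℕ) :
    n ∣ #{S ∈ powersetCard s (univ : Finset (ZMod n)) | period (1 : ZMod n) S = n} := by
  classical
  have := card_dvd_card_filter_stabilizer_eq_bot (G := ZMod n) s
  rwa [ZMod.card, ← filter_congr fun S _ => period_one_eq_iff_stabilizer_eq_bot S] at this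

theorem card_filter_period_one_eq_pos {s : ℕ} (hs : 0 < s) (hsn : s < n) :
    0 < #{S ∈ powersetCard s (univ : Finset (ZMod n)) | period (1 : ZMod n) S = n} := by
  refine card_pos.2 ⟨({y : ZMod n | y.val < s} : Finset (ZMod n)), mem_filter.2 ⟨?_, ?_⟩⟩
  · exact mem_powersetCard_univ.2 (card_filter_val_lt hsn.le)
  · refine (period_one_eq_iff_stabilizer_eq_bot _).2 <|
      stabilizer_eq_bot_of_filter_add_notMem_eq_singleton (g := 1) (x := (s - 1 : ℕ)) ?_
    ext y
    simpa using val_lt_and_not_val_add_one_lt_iff hs hsn y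

end ZMod

open ArithmeticFunction ArithmeticFunction.Moebius in
/-- For all integers `s, t ≥ 1`, the Witt-type number
`m_{s,t} = (1/(s+t)) * Σ_{d ∣ gcd(s,t)} μ(d) * ((s+t)/d)! / ((s/d)! (t/d)!)`
is a positive integer. -/
theorem stmt_3 (s t : ℕ) (hs : 1 ≤ s) (ht : 1 ≤ t) :
    ∃ n : ℕ, 0 < n ∧
      (n : ℚ) = (1 / ((s : ℚ) + t)) *
        ∑ d ∈ (Nat.gcd s t).divisors,
          (μ d : ℚ) * (Nat.factorial ((s + t) / d)) /
            ((Nat.factorial (s / d)) * (Nat.factorial (t / d))) := by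
  have : NeZero (s + t) := ⟨by omega⟩
  obtain ⟨M, hM⟩ := ZMod.dvd_card_filter_period_one_eq (n := s + t) s
  have hpos := ZMod.card_filter_period_one_eq_pos (n := s + t) hs (by omega)
  have hcount := ZMod.card_filter_period_one_eq (n := s + t) s
  rw [hM] at hpos hcount
  refine ⟨M, pos_of_mul_pos_right hpos (Nat.zero_le _), ?_⟩
  have hterm : ∀ d ∈ (Nat.gcd s t).divisors, (μ d : ℚ) * ((s + t) / d).factorial /
      ((s / d).factorial * (t / d).factorial) = μ d * (((s + t) / d).choose (s / d) : ℚ) := by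
    intro d hd
    rw [Nat.add_div_of_dvd_right ((Nat.dvd_of_mem_divisors hd).trans (Nat.gcd_dvd_left s t)),
      Nat.cast_add_choose, mul_div_assoc]
  rw [sum_congr rfl hterm, ← Nat.filter_dvd_divisors_add, sum_filter]
  have hQ := congrArg (Int.cast : ℤ → ℚ) hcount
  push_cast at hQ
  rw [← hQ]
  field_simp
end

section
/- Let p be a prime, m ≥ 1, and r = p^m. Working in the free associative algebra over F_p on noncommuting variables x and y, consider the element S(t) = Σ_{k=0}^{r-1} (x + t y)^k · y · (x + t y)^{r-1-k}, regarded as a polynomial in a commuting indeterminate t with coefficients in the free associative algebra. Then for every c with 1 ≤ c ≤ p^{m-1}, the coefficient of t^{cp-1} in S(t) is zero. -/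
/-!
Since `t` is central, `S(t)` is the derivative in `t` of `(x + t y)^r`, by the noncommutative
Leibniz rule. The coefficient of `t^(n-1)` in a derivative is `n` times a coefficient, and
`n = c p` vanishes in characteristic `p`.
-/

open Polynomial

namespace Polynomial

variable {R : Type*} [Semiring R]

theorem derivative_pow_eq_sum (f : R[X]) (n : ℕ) :
    derivative (f ^ n) =
      ∑ k ∈ Finset.range n, f ^ k * derivative f * f ^ (n - 1 - k) := by
  induction n with
  | zero => simp
  | succ n ih =>
    rw [pow_succ', derivative_mul, ih, Finset.mul_sum, Finset.sum_range_succ']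
    simp only [Nat.add_sub_cancel, pow_zero, one_mul, ← mul_assoc, ← pow_succ']
    rw [add_comm]
    congr 1
    exact Finset.sum_congr rfl fun k _ => by congr 2; omega

theorem derivative_C_add_X_mul_C (a b : R) : derivative (C a + X * C b) = C b := by
  simp [derivative_mul]

theorem coeff_derivative_pred_eq_zero (f : R[X]) {n : ℕ} (hn : n ≠ 0) (h : (n : R) = 0) :
    (derivative f).coeff (n - 1) = 0 := by
  obtain ⟨n, rfl⟩ := Nat.exists_eq_succ_of_ne_zero hn
  rw [coeff_derivative, Nat.succ_sub_one, ← Nat.cast_succ, h, mul_zero]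

end Polynomial

theorem natCast_mul_eq_zero_of_zmodAlgebra (p : ℕ) (A : Type*) [Semiring A] [Algebra (ZMod p) A]
    (c : ℕ) : ((c * p : ℕ) : A) = 0 := by
  rw [← map_natCast (algebraMap (ZMod p) A), Nat.cast_mul, ZMod.natCast_self, mul_zero, map_zero]

open Polynomial in
theorem stmt_5_general (p : ℕ) [Fact p.Prime] (m : ℕ) (c : ℕ)
    (hc1 : 1 ≤ c) :
    (∑ k ∈ Finset.range (p ^ m),
        ((C (FreeAlgebra.ι (ZMod p) (0 : Fin 2)) + X * C (FreeAlgebra.ι (ZMod p) (1 : Fin 2))) ^ k *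
          C (FreeAlgebra.ι (ZMod p) (1 : Fin 2)) *
          (C (FreeAlgebra.ι (ZMod p) (0 : Fin 2)) + X * C (FreeAlgebra.ι (ZMod p) (1 : Fin 2))) ^
            (p ^ m - 1 - k))).coeff (c * p - 1) = 0 := by
  set x := FreeAlgebra.ι (ZMod p) (0 : Fin 2)
  set y := FreeAlgebra.ι (ZMod p) (1 : Fin 2)
  have hcp : c * p ≠ 0 := Nat.mul_ne_zero (by omega) (Fact.out : p.Prime).ne_zero
  have hS := derivative_pow_eq_sum (C x + X * C y) (p ^ m)
  rw [derivative_C_add_X_mul_C] at hS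
  rw [← hS]
  exact coeff_derivative_pred_eq_zero _ hcp (natCast_mul_eq_zero_of_zmodAlgebra p _ c)

open Polynomial in
/-- Let `p` be prime, `m ≥ 1`, `r = p^m`.  In the free associative algebra over
`F_p` on noncommuting `x, y`, with a central polynomial variable `t`, set
`S(t) = Σ_{k=0}^{r-1} (x + t y)^k · y · (x + t y)^{r-1-k}`.  Then for every
`1 ≤ c ≤ p^{m-1}`, the coefficient of `t^(c*p-1)` in `S(t)` is zero. -/
theorem stmt_5 (p : ℕ) [Fact p.Prime] (m : ℕ) (hm : 1 ≤ m) (c : ℕ)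
    (hc1 : 1 ≤ c) (hc2 : c ≤ p ^ (m - 1)) :
    (∑ k ∈ Finset.range (p ^ m),
        ((C (FreeAlgebra.ι (ZMod p) (0 : Fin 2)) + X * C (FreeAlgebra.ι (ZMod p) (1 : Fin 2))) ^ k *
          C (FreeAlgebra.ι (ZMod p) (1 : Fin 2)) *
          (C (FreeAlgebra.ι (ZMod p) (0 : Fin 2)) + X * C (FreeAlgebra.ι (ZMod p) (1 : Fin 2))) ^
            (p ^ m - 1 - k))).coeff (c * p - 1) = 0 :=
  stmt_5_general p m c hc1
end

section
/- Let p be a prime and r a positive multiple of p that is not a power of p. In the free associative algebra over F_p on x, y, consider S(t) = Σ_{k=0}^{r-1} (-1)^k C(r-1, k) (x + t y)^k · y · (x + t y)^{r-1-k} as a polynomial in the central variable t. Then for every v with 1 ≤ v ≤ r/2, the coefficient of t^{v-1} in S(t) is nonzero. -/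
/-!
Write `b k = (-1)^k C(r-1,k)`. The coefficient of `t^(v-1)` is `Σ_w (Σ_{k ∈ T_w} b k) w`, summed
over the words `w` of length `r` with `v` letters `y`, where `T_w` is the set of positions of `y`
in `w`. The coefficient of a single word is read off by a representation by weighted shift
matrices of size `r + 1`, so it suffices to find `T ⊆ {0, …, r-1}` with `|T| = v` and
`Σ_{k ∈ T} b k ≠ 0`. As `r` is not a power of `p`, Lucas' theorem gives `0 < i < r` with
`C(r,i) ≠ 0` mod `p`; then `b (i-1) - b i = ± C(r,i) ≠ 0`, and since `v < r` one of two `v`-sets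
that differ only by exchanging `i - 1` and `i` has nonzero sum.
-/

open Finset Polynomial

lemma neg_one_pow_mul_choose_sub_neg_one_pow_succ_mul_choose {R : Type*} [Ring R] (n s : ℕ) :
    (-1 : R) ^ s * n.choose s - (-1) ^ (s + 1) * n.choose (s + 1) =
      (-1) ^ s * (n + 1).choose (s + 1) := by
  rw [Nat.choose_succ_succ', Nat.cast_add, pow_succ]
  noncomm_ring

lemma exists_choose_ne_zero_of_ne_pow (p : ℕ) [Fact p.Prime] {n : ℕ} (hn : 0 < n)
    (hnp : ¬ ∃ m : ℕ, n = p ^ m) : ∃ i ∈ Icc 1 (n - 1), (n.choose i : ZMod p) ≠ 0 := by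
  contrapose! hnp
  refine ⟨_, Choose.eq_pow_multiplicity_of_choose_modEq_zero hn fun i hi => ?_⟩
  rw [← ZMod.intCast_eq_intCast_iff]
  simpa using hnp i hi

lemma Finset.exists_subset_card_eq_sum_ne_zero {ι M : Type*} [AddCancelCommMonoid M]
    {S : Finset ι} {b : ι → M} {i j : ι} (hi : i ∈ S) (hj : j ∈ S) (hb : b i ≠ b j) {v : ℕ}
    (hv : 0 < v) (hvS : v < #S) : ∃ T ⊆ S, #T = v ∧ ∑ k ∈ T, b k ≠ 0 := by
  classical
  have hij : i ≠ j := fun h => hb (h ▸ rfl)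
  obtain ⟨U, hU, hUcard⟩ : ∃ U ⊆ S \ {i, j}, #U = v - 1 := by
    apply exists_subset_card_eq
    rw [card_sdiff_of_subset (insert_subset hi (singleton_subset_iff.2 hj)), card_pair hij]
    omega
  have hUS : U ⊆ S := hU.trans sdiff_subset
  have hiU : i ∉ U := fun h => (mem_sdiff.1 (hU h)).2 (by simp)
  have hjU : j ∉ U := fun h => (mem_sdiff.1 (hU h)).2 (by simp)
  by_cases hzero : b i + ∑ k ∈ U, b k = 0
  · refine ⟨insert j U, insert_subset hj hUS, by rw [card_insert_of_notMem hjU]; omega, ?_⟩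
    rw [sum_insert hjU, ← hzero]
    exact fun h => hb (add_right_cancel h).symm
  · exact ⟨insert i U, insert_subset hi hUS, by rw [card_insert_of_notMem hiU]; omega,
      by rwa [sum_insert hiU]⟩

lemma exists_subset_range_card_eq_sum_alternating_choose_ne_zero (p : ℕ) [Fact p.Prime]
    {r : ℕ} (hnp : ¬ ∃ m : ℕ, r = p ^ m) {v : ℕ} (hv : 0 < v) (hvr : v < r) :
    ∃ T ⊆ range r, #T = v ∧ ∑ k ∈ T, (-1 : ZMod p) ^ k * (r - 1).choose k ≠ 0 := by
  obtain ⟨i, hi, hchoose⟩ := exists_choose_ne_zero_of_ne_pow p (by omega) hnp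
  rw [mem_Icc] at hi
  refine exists_subset_card_eq_sum_ne_zero (i := i - 1) (j := i) (mem_range.2 (by omega))
    (mem_range.2 (by omega)) (fun h => hchoose ?_) hv (by rwa [card_range])
  have := neg_one_pow_mul_choose_sub_neg_one_pow_succ_mul_choose (R := ZMod p) (r - 1) (i - 1)
  rw [Nat.sub_add_cancel hi.1, Nat.sub_add_cancel (by omega : 1 ≤ r), h, sub_self] at this
  exact (mul_eq_zero.1 this.symm).resolve_left (pow_ne_zero _ (neg_ne_zero.2 one_ne_zero))

section ShiftMatrix

variable {R : Type*} {n : ℕ}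

def shiftMatrix [Zero R] (n k : ℕ) (f : ℕ → R) : Matrix (Fin (n + 1)) (Fin (n + 1)) R :=
  Matrix.of fun i j => if (j : ℕ) = i + k then f i else 0

lemma shiftMatrix_mul_shiftMatrix [Semiring R] (k l : ℕ) (f g : ℕ → R) :
    shiftMatrix n k f * shiftMatrix n l g = shiftMatrix n (k + l) fun i => f i * g (i + k) := by
  ext i j
  simp only [shiftMatrix, Matrix.mul_apply, Matrix.of_apply, ite_mul, zero_mul]
  by_cases h : (i : ℕ) + k ≤ n
  · rw [sum_eq_single ⟨i + k, by omega⟩ (fun m _ hm => if_neg fun h => hm (Fin.ext h)) (by simp)]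
    simp [add_assoc]
  · rw [sum_eq_zero fun m _ => if_neg (by omega), if_neg (by omega)]

lemma shiftMatrix_zero_one [Semiring R] : shiftMatrix n 0 (1 : ℕ → R) = 1 := by
  ext i j
  simp [shiftMatrix, Matrix.one_apply, Fin.ext_iff, eq_comm]

lemma shiftMatrix_one_pow [CommSemiring R] (f : ℕ → R) (k : ℕ) :
    shiftMatrix n 1 f ^ k = shiftMatrix n k fun i => ∏ t ∈ range k, f (i + t) := by
  induction k with
  | zero => exact shiftMatrix_zero_one.symm
  | succ k ih => simp [pow_succ, ih, shiftMatrix_mul_shiftMatrix, prod_range_succ]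

lemma shiftMatrix_apply_zero_last [Zero R] (f : ℕ → R) :
    shiftMatrix n n f 0 (Fin.last n) = f 0 := by
  simp [shiftMatrix]

lemma shiftMatrix_pow_mul_mul_pow_apply_zero_last [CommSemiring R] (e w : ℕ → R) {k l : ℕ}
    (h : k + 1 + l = n) :
    (shiftMatrix n 1 e ^ k * shiftMatrix n 1 w * shiftMatrix n 1 e ^ l) 0 (Fin.last n) =
      ∏ t ∈ range n, Function.update e k (w k) t := by
  classical
  rw [shiftMatrix_one_pow, shiftMatrix_one_pow, shiftMatrix_mul_shiftMatrix,
    shiftMatrix_mul_shiftMatrix, ← h, shiftMatrix_apply_zero_last, prod_range_add,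
    prod_range_succ]
  simp only [zero_add, Function.update_self]
  congr 2
  · exact prod_congr rfl fun t ht => by
      rw [Function.update_of_ne (by rw [mem_range] at ht; omega)]
  · exact funext fun t => by rw [Function.update_of_ne (by omega)]

end ShiftMatrix

section WordCoeff

variable (R : Type*) [CommRing R]

/-- `wordCoeffRep R n T a 0 (Fin.last n)` is the coefficient in `a` of the word of length `n`
whose letters `y` (the generator `1`) sit exactly at the positions in `T`. -/
def wordCoeffRep (n : ℕ) (T : Finset ℕ) :
    FreeAlgebra R (Fin 2) →ₐ[R] Matrix (Fin (n + 1)) (Fin (n + 1)) R :=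
  FreeAlgebra.lift R ![shiftMatrix n 1 fun i => if i ∈ T then 0 else 1,
    shiftMatrix n 1 fun i => if i ∈ T then 1 else 0]

variable {R}

lemma apply_coeff_apply {A : Type*} [Semiring A] [Algebra R A] {m : Type*} [Fintype m]
    [DecidableEq m] (φ : A →ₐ[R] Matrix m m R) (q : A[X]) (k : ℕ) (i j : m) :
    φ (q.coeff k) i j = (matPolyEquiv.symm (mapAlgHom φ q) i j).coeff k := by
  rw [← matPolyEquiv_coeff_apply, AlgEquiv.apply_symm_apply, coeff_mapAlgHom_apply]

variable {n : ℕ} {T : Finset ℕ}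

lemma matPolyEquiv_symm_mapAlgHom_wordCoeffRep_C_add_X_mul_C :
    matPolyEquiv.symm (mapAlgHom (wordCoeffRep R n T)
      (C (FreeAlgebra.ι R 0) + X * C (FreeAlgebra.ι R 1))) =
      shiftMatrix n 1 fun i => if i ∈ T then X else 1 := by
  ext i j : 2
  by_cases hj : (j : ℕ) = i + 1 <;> by_cases hi : (i : ℕ) ∈ T <;>
    simp [wordCoeffRep, shiftMatrix, hj, hi]

lemma matPolyEquiv_symm_mapAlgHom_wordCoeffRep_C :
    matPolyEquiv.symm (mapAlgHom (wordCoeffRep R n T) (C (FreeAlgebra.ι R 1))) =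
      shiftMatrix n 1 fun i => if i ∈ T then 1 else 0 := by
  ext i j : 2
  by_cases hj : (j : ℕ) = i + 1 <;> by_cases hi : (i : ℕ) ∈ T <;>
    simp [wordCoeffRep, shiftMatrix, hj, hi]

lemma prod_update_ite_mem {k : ℕ} (hT : T ⊆ range n) (hk : k < n) :
    ∏ t ∈ range n, Function.update (fun i => if i ∈ T then (X : R[X]) else 1) k
      (if k ∈ T then 1 else 0) t = if k ∈ T then X ^ (#T - 1) else 0 := by
  classical
  split_ifs with hkT
  · rw [← card_erase_of_mem hkT, ← prod_const, ← inter_eq_right.2 ((erase_subset k T).trans hT),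
      ← prod_ite_mem]
    refine prod_congr rfl fun t _ => ?_
    by_cases htk : t = k <;> simp [htk, Function.update_of_ne]
  · exact prod_eq_zero (mem_range.2 hk) (by simp)

lemma wordCoeffRep_coeff_sum_apply_zero_last (hT : T ⊆ range n) (b : ℕ → R) :
    wordCoeffRep R n T ((∑ k ∈ range n, b k •
      ((C (FreeAlgebra.ι R (0 : Fin 2)) + X * C (FreeAlgebra.ι R (1 : Fin 2))) ^ k *
        C (FreeAlgebra.ι R (1 : Fin 2)) *
        (C (FreeAlgebra.ι R (0 : Fin 2)) + X * C (FreeAlgebra.ι R (1 : Fin 2))) ^ (n - 1 - k))).coeff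
          (#T - 1)) 0 (Fin.last n) = ∑ k ∈ T, b k := by
  rw [apply_coeff_apply]
  simp only [map_sum, map_smul, map_mul, map_pow,
    matPolyEquiv_symm_mapAlgHom_wordCoeffRep_C_add_X_mul_C,
    matPolyEquiv_symm_mapAlgHom_wordCoeffRep_C, Matrix.sum_apply, Matrix.smul_apply]
  conv_rhs => rw [← inter_eq_right.2 hT, ← sum_ite_mem]
  rw [finsetSum_coeff]
  refine sum_congr rfl fun k hk => ?_
  rw [mem_range] at hk
  rw [shiftMatrix_pow_mul_mul_pow_apply_zero_last _ _ (by omega), prod_update_ite_mem hT hk]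
  split_ifs <;> simp

end WordCoeff

open Polynomial in
theorem stmt_6_general (p : ℕ) [Fact p.Prime] (r : ℕ)
    (hnp : ¬ ∃ m : ℕ, r = p ^ m) (v : ℕ) (hv1 : 1 ≤ v) (hv2 : v ≤ r / 2) :
    (∑ k ∈ Finset.range r,
        ((-1 : ZMod p) ^ k * (Nat.choose (r - 1) k : ZMod p)) •
          ((C (FreeAlgebra.ι (ZMod p) (0 : Fin 2)) + X * C (FreeAlgebra.ι (ZMod p) (1 : Fin 2))) ^ k *
            C (FreeAlgebra.ι (ZMod p) (1 : Fin 2)) *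
            (C (FreeAlgebra.ι (ZMod p) (0 : Fin 2)) + X * C (FreeAlgebra.ι (ZMod p) (1 : Fin 2))) ^
              (r - 1 - k))).coeff (v - 1) ≠ 0 := by
  obtain ⟨T, hT, rfl, hsum⟩ :=
    exists_subset_range_card_eq_sum_alternating_choose_ne_zero p hnp hv1 (by omega)
  intro h
  apply hsum
  rw [← wordCoeffRep_coeff_sum_apply_zero_last hT, h, map_zero, Matrix.zero_apply]

open Polynomial in
/-- Let `p` be a prime and `r` a positive multiple of `p` that is not a power
of `p`.  In the free associative algebra over `F_p` on `x, y`, with central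
variable `t`, set
`S(t) = Σ_{k=0}^{r-1} (-1)^k C(r-1,k) (x + t y)^k · y · (x + t y)^{r-1-k}`.
Then for every `1 ≤ v ≤ r/2`, the coefficient of `t^(v-1)` in `S(t)` is
nonzero. -/
theorem stmt_6 (p : ℕ) [Fact p.Prime] (r : ℕ) (hr : 0 < r) (hpr : p ∣ r)
    (hnp : ¬ ∃ m : ℕ, r = p ^ m) (v : ℕ) (hv1 : 1 ≤ v) (hv2 : v ≤ r / 2) :
    (∑ k ∈ Finset.range r,
        ((-1 : ZMod p) ^ k * (Nat.choose (r - 1) k : ZMod p)) •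
          ((C (FreeAlgebra.ι (ZMod p) (0 : Fin 2)) + X * C (FreeAlgebra.ι (ZMod p) (1 : Fin 2))) ^ k *
            C (FreeAlgebra.ι (ZMod p) (1 : Fin 2)) *
            (C (FreeAlgebra.ι (ZMod p) (0 : Fin 2)) + X * C (FreeAlgebra.ι (ZMod p) (1 : Fin 2))) ^
              (r - 1 - k))).coeff (v - 1) ≠ 0 :=
  stmt_6_general p r hnp v hv1 hv2
end

section
/- Let p be a prime, r a multiple of p, and fix v with 1 ≤ v ≤ r/2. For a monomial η = y x^{a_1} y x^{a_2} ⋯ y x^{a_v} with a_i ≥ 0 and a_1 + ⋯ + a_v = r - v, its coefficient in Σ_{k=0}^{r-1} (-1)^k C(r-1,k) (x+ty)^k y (x+ty)^{r-1-k} equals t^{v-1} · Σ_{j=0}^{v-1} (-1)^{K_j} C(r-1, K_j), where K_j = j + Σ_{i=1}^{j} a_i (so K_0 = 0). -/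
/-!
The substitution `y ↦ t y` is an algebra map from the free algebra to its polynomial ring in
`t`, sending a word `w` to `t ^ (number of y's in w) • w`; it maps `x + y` to `x + t y`. Only
the middle `y` escapes the substitution, so `t (x + t y)^k y (x + t y)^(r-1-k)` is the image of
`(x + y)^k y (x + y)^(r-1-k)`, the sum of all words of length `r` with a `y` in position `k`
(counting from `0`). Hence the `η`-coefficient of the `t^i`-part is the sum of `(-1)^k C(r-1,k)`
over the positions `k` of the letters `y` in `η` if `η` has `i + 1` letters `y`, and `0`
otherwise; those positions are `K_0, …, K_{v-1}`.
-/

open Polynomial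

/-- The word `η = y x^{a_1} y x^{a_2} ⋯ y x^{a_v}` in the free monoid on two
letters (letter `0` playing the role of `x` and letter `1` that of `y`). -/
def etaWord (v : ℕ) (a : Fin v → ℕ) : FreeMonoid (Fin 2) :=
  (List.ofFn fun i : Fin v =>
    FreeMonoid.of (1 : Fin 2) * (FreeMonoid.of (0 : Fin 2)) ^ (a i)).prod

/-- `K_j = j + Σ_{i=1}^{j} a_i` (so `K_0 = 0`), where `a : Fin v → ℕ` lists
`a_1, …, a_v`. -/
def Kexp (v : ℕ) (a : Fin v → ℕ) (j : ℕ) : ℕ :=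
  j + ∑ i : Fin v, if (i : ℕ) < j then a i else 0

theorem FreeMonoid.toList_of_pow {α : Type*} (c : α) (n : ℕ) :
    (FreeMonoid.of c ^ n).toList = List.replicate n c := by
  induction n with
  | zero => rfl
  | succ n ih => rw [pow_succ, FreeMonoid.toList_mul, ih, List.replicate_succ']; rfl

namespace FreeMonoidAlgebra

open MonoidAlgebra

variable {R α : Type*}

section Semiring

variable [Semiring R]

theorem coeff_single_of_mul_one (c : α) (r : R) (f : MonoidAlgebra R (FreeMonoid α)) :
    (single (FreeMonoid.of c) r * f).coeff 1 = 0 :=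
  coeff_single_mul_of_forall_mul_ne _ _ fun w h => by
    simpa using congrArg FreeMonoid.length h

theorem coeff_single_of_mul_of_mul [DecidableEq α] (c d : α)
    (f : MonoidAlgebra R (FreeMonoid α)) (w : FreeMonoid α) :
    (single (FreeMonoid.of c) 1 * f).coeff (FreeMonoid.of d * w) =
      if d = c then f.coeff w else 0 := by
  split_ifs with h
  · rw [h, coeff_single_mul_mul, one_mul]
  · refine coeff_single_mul_of_forall_mul_ne _ _ fun w' hw => h ?_
    exact (by simpa using (congrArg FreeMonoid.toList hw).symm : d = c ∧ _).1

variable [Fintype α]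

noncomputable def letterSum : MonoidAlgebra R (FreeMonoid α) := ∑ c, single (FreeMonoid.of c) 1

theorem coeff_letterSum_mul_one (f : MonoidAlgebra R (FreeMonoid α)) :
    (letterSum * f).coeff 1 = 0 := by
  simp [letterSum, Finset.sum_mul]

theorem coeff_letterSum_mul_of_mul (f : MonoidAlgebra R (FreeMonoid α)) (d : α)
    (w : FreeMonoid α) : (letterSum * f).coeff (FreeMonoid.of d * w) = f.coeff w := by
  classical
  simp [letterSum, Finset.sum_mul, coeff_single_of_mul_of_mul]

theorem coeff_letterSum_pow_mul (k : ℕ) (f : MonoidAlgebra R (FreeMonoid α)) (u : List α) :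
    (letterSum ^ k * f).coeff (.ofList u) =
      if k ≤ u.length then f.coeff (.ofList (u.drop k)) else 0 := by
  induction k generalizing u with
  | zero => simp
  | succ k ih =>
    rw [pow_succ', mul_assoc]
    cases u with
    | nil => simp [coeff_letterSum_mul_one]
    | cons d u => simp [coeff_letterSum_mul_of_mul, ih]

theorem coeff_letterSum_pow (m : ℕ) (u : List α) :
    (letterSum ^ m : MonoidAlgebra R (FreeMonoid α)).coeff (.ofList u) =
      if u.length = m then 1 else 0 := by
  classical
  have hpow := coeff_letterSum_pow_mul m (1 : MonoidAlgebra R (FreeMonoid α)) u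
  rw [mul_one] at hpow
  have hnil : (1 : FreeMonoid α) = .ofList (u.drop m) ↔ u.length ≤ m := by
    rw [eq_comm, ← FreeMonoid.length_eq_zero]
    simp only [FreeMonoid.length, FreeMonoid.toList_ofList, List.length_drop]
    omega
  rw [hpow, one_def, coeff_single, Finsupp.single_apply]
  simp only [hnil]
  split_ifs <;> first | rfl | omega

theorem coeff_letterSum_pow_mul_single_mul_letterSum_pow [DecidableEq α] (k m : ℕ) (c : α)
    (u : List α) :
    (letterSum ^ k * single (FreeMonoid.of c) 1 * letterSum ^ m :
        MonoidAlgebra R (FreeMonoid α)).coeff (.ofList u) =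
      if u.length = k + 1 + m ∧ u[k]? = some c then 1 else 0 := by
  rw [mul_assoc, coeff_letterSum_pow_mul]
  by_cases hk : k ≤ u.length
  · rw [if_pos hk]
    have hhead := List.head?_drop (l := u) (i := k)
    have hlen := List.length_drop (l := u) (i := k)
    cases hdrop : u.drop k with
    | nil =>
      rw [hdrop, List.length_nil] at hlen
      rw [FreeMonoid.ofList_nil, coeff_single_of_mul_one, if_neg]
      omega
    | cons d u' =>
      rw [hdrop] at hlen hhead
      have hm : u'.length = m ↔ u.length = k + 1 + m := by
        rw [List.length_cons] at hlen
        omega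
      rw [FreeMonoid.ofList_cons, coeff_single_of_mul_of_mul, coeff_letterSum_pow, ← hhead]
      simp only [List.head?_cons, Option.some.injEq, hm, and_comm, ite_and]
  · rw [if_neg hk, if_neg]
    omega

end Semiring

section CommSemiring

variable [CommSemiring R] [DecidableEq α]

noncomputable def gradeByLetter (b : α) :
    MonoidAlgebra R (FreeMonoid α) →ₐ[R] (MonoidAlgebra R (FreeMonoid α))[X] :=
  lift R _ (FreeMonoid α)
    { toFun w := monomial (w.toList.count b) (single w 1)
      map_one' := by simp [← one_def]
      map_mul' w w' := by
        rw [monomial_mul_monomial, single_mul_single, one_mul, FreeMonoid.toList_mul,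
          List.count_append] }

theorem gradeByLetter_single (b : α) (w : FreeMonoid α) (r : R) :
    gradeByLetter b (single w r) = monomial (w.toList.count b) (single w r) := by
  simp only [gradeByLetter, lift_single, MonoidHom.coe_mk, OneHom.coe_mk, smul_monomial,
    smul_single', mul_one]

theorem coeff_coeff_gradeByLetter (b : α) (f : MonoidAlgebra R (FreeMonoid α)) (i : ℕ)
    (w : FreeMonoid α) :
    ((gradeByLetter b f).coeff i).coeff w = if w.toList.count b = i then f.coeff w else 0 := by
  induction f using MonoidAlgebra.induction_linear with
  | zero => simp
  | add f g hf hg =>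
    simp only [map_add, Polynomial.coeff_add, MonoidAlgebra.coeff_add, Finsupp.add_apply, hf, hg]
    split_ifs <;> simp
  | single w' r =>
    rw [gradeByLetter_single, coeff_monomial]
    by_cases hw : w' = w
    · subst hw
      split_ifs <;> simp
    · split_ifs <;> simp [hw]

theorem coeff_coeff_gradeByLetter_pow_mul_C_mul_pow [Fintype α] (b : α) (k m i : ℕ)
    (u : List α) :
    ((gradeByLetter b letterSum ^ k * C (single (FreeMonoid.of b) 1) *
        gradeByLetter b letterSum ^ m : (MonoidAlgebra R (FreeMonoid α))[X]).coeff i).coeff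
        (.ofList u) =
      if u.count b = i + 1 ∧ u.length = k + 1 + m ∧ u[k]? = some b then 1 else 0 := by
  have hX : X * (gradeByLetter b letterSum ^ k * C (single (FreeMonoid.of b) 1) *
        gradeByLetter b letterSum ^ m : (MonoidAlgebra R (FreeMonoid α))[X]) =
      gradeByLetter b (letterSum ^ k * single (FreeMonoid.of b) 1 * letterSum ^ m) := by
    rw [map_mul, map_mul, map_pow, map_pow, gradeByLetter_single, FreeMonoid.toList_of,
      List.count_singleton_self, ← C_mul_X_eq_monomial, X_mul, mul_assoc _ _ X, ← X_mul,
      ← mul_assoc, mul_assoc _ _ X]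
  rw [← coeff_X_mul, hX, coeff_coeff_gradeByLetter, FreeMonoid.toList_ofList,
    coeff_letterSum_pow_mul_single_mul_letterSum_pow]
  simp only [ite_and]

end CommSemiring

section FreeAlgebra

variable (R) [CommSemiring R]

theorem mapAlgHom_equivMonoidAlgebraFreeMonoid_C_ι (c : α) :
    mapAlgHom (FreeAlgebra.equivMonoidAlgebraFreeMonoid (R := R) (X := α)).toAlgHom
        (C (FreeAlgebra.ι R c)) = C (single (FreeMonoid.of c) 1) := by
  simp [FreeAlgebra.equivMonoidAlgebraFreeMonoid]

theorem mapAlgHom_equivMonoidAlgebraFreeMonoid_C_add_X_mul_C :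
    mapAlgHom (FreeAlgebra.equivMonoidAlgebraFreeMonoid (R := R) (X := Fin 2)).toAlgHom
        (C (FreeAlgebra.ι R 0) + X * C (FreeAlgebra.ι R 1)) = gradeByLetter 1 letterSum := by
  rw [map_add, map_mul, mapAlgHom_equivMonoidAlgebraFreeMonoid_C_ι,
    mapAlgHom_equivMonoidAlgebraFreeMonoid_C_ι, coe_mapAlgHom, map_X]
  simp [letterSum, Fin.sum_univ_two, gradeByLetter_single, ← C_mul_X_eq_monomial, X_mul]

end FreeAlgebra

end FreeMonoidAlgebra

theorem toList_etaWord_succ (v : ℕ) (a : Fin (v + 1) → ℕ) :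
    (etaWord (v + 1) a).toList =
      1 :: List.replicate (a 0) 0 ++ (etaWord v (Fin.tail a)).toList := by
  simp [etaWord, List.ofFn_succ, FreeMonoid.toList_of_pow, Fin.tail]

theorem length_toList_etaWord (v : ℕ) (a : Fin v → ℕ) :
    (etaWord v a).toList.length = v + ∑ i, a i := by
  induction v with
  | zero => rfl
  | succ v ih =>
    rw [toList_etaWord_succ, List.length_append, ih, Fin.sum_univ_succ]
    simp only [List.length_cons, List.length_replicate, Fin.tail]
    omega

theorem count_toList_etaWord (v : ℕ) (a : Fin v → ℕ) : (etaWord v a).toList.count 1 = v := by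
  induction v with
  | zero => rfl
  | succ v ih => simp [toList_etaWord_succ, List.count_replicate, ih]

theorem Kexp_zero_right (v : ℕ) (a : Fin v → ℕ) : Kexp v a 0 = 0 := by
  simp [Kexp]

theorem Kexp_succ_succ (v : ℕ) (a : Fin (v + 1) → ℕ) (j : ℕ) :
    Kexp (v + 1) a (j + 1) = a 0 + 1 + Kexp v (Fin.tail a) j := by
  simp only [Kexp, Fin.sum_univ_succ, Fin.val_zero, Fin.val_succ, Fin.tail]
  simp only [Nat.zero_lt_succ, if_true, Nat.add_lt_add_iff_right]
  omega

theorem sum_range_ite_getElem?_etaWord {M : Type*} [AddCommMonoid M] (v : ℕ) (a : Fin v → ℕ)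
    (f : ℕ → M) :
    ∑ k ∈ Finset.range (etaWord v a).toList.length,
        (if (etaWord v a).toList[k]? = some 1 then f k else 0) =
      ∑ j ∈ Finset.range v, f (Kexp v a j) := by
  induction v generalizing f with
  | zero => rfl
  | succ v ih =>
    have hlen : (1 :: List.replicate (a 0) (0 : Fin 2)).length = a 0 + 1 := by simp
    rw [toList_etaWord_succ, List.length_append, hlen, Finset.sum_range_add, Finset.sum_range_succ',
      Finset.sum_range_succ' _ v, Kexp_zero_right]
    set w := (etaWord v (Fin.tail a)).toList
    have hx : ∀ k ∈ Finset.range (a 0),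
        (if (1 :: List.replicate (a 0) 0 ++ w)[k + 1]? = some 1 then f (k + 1) else 0) = 0 := by
      intro k hk
      rw [Finset.mem_range] at hk
      rw [if_neg]
      simp [List.getElem?_append_left, hk]
    have hy : ∀ k, (1 :: List.replicate (a 0) 0 ++ w)[a 0 + 1 + k]? = w[k]? := by
      intro k
      rw [List.getElem?_append_right (by simp)]
      simp
    simp only [Finset.sum_eq_zero hx, hy, Kexp_succ_succ, zero_add]
    rw [ih (Fin.tail a) (fun k => f (a 0 + 1 + k)), add_comm]
    rfl

open FreeMonoidAlgebra

theorem stmt_7_general (F : Type*) [Field F]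
    (r : ℕ) (v : ℕ) (hv2 : v ≤ r / 2)
    (a : Fin v → ℕ) (ha : ∑ i, a i = r - v) (i : ℕ) :
    MonoidAlgebra.coeff ((FreeAlgebra.equivMonoidAlgebraFreeMonoid (R := F) (X := Fin 2))
        ((∑ k ∈ Finset.range r,
            ((-1 : F) ^ k * (Nat.choose (r - 1) k : F)) •
              ((C (FreeAlgebra.ι F (0 : Fin 2)) + X * C (FreeAlgebra.ι F (1 : Fin 2))) ^ k *
                C (FreeAlgebra.ι F (1 : Fin 2)) *
                (C (FreeAlgebra.ι F (0 : Fin 2)) + X * C (FreeAlgebra.ι F (1 : Fin 2))) ^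
                  (r - 1 - k))).coeff i))
        (etaWord v a) =
      if i = v - 1 then
        ∑ j ∈ Finset.range v,
          (-1 : F) ^ (Kexp v a j) * (Nat.choose (r - 1) (Kexp v a j) : F)
      else 0 := by
  have hη : (etaWord v a).toList.length = r := by
    rw [length_toList_etaWord, ha]
    omega
  rw [← AlgEquiv.coe_toAlgHom, ← coeff_mapAlgHom_apply,
    ← FreeMonoid.ofList_toList (etaWord v a)]
  simp only [map_sum, map_smul, map_mul, map_pow, mapAlgHom_equivMonoidAlgebraFreeMonoid_C_ι,
    mapAlgHom_equivMonoidAlgebraFreeMonoid_C_add_X_mul_C, finsetSum_coeff, coeff_smul,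
    MonoidAlgebra.coeff_sum, Finsupp.finsetSum_apply, MonoidAlgebra.coeff_smul_apply,
    coeff_coeff_gradeByLetter_pow_mul_C_mul_pow, count_toList_etaWord, hη]
  by_cases hvi : v = i + 1
  · rw [if_pos (by omega),
      ← sum_range_ite_getElem?_etaWord v a fun k => (-1 : F) ^ k * ((r - 1).choose k : F), hη]
    refine Finset.sum_congr rfl fun k hk => ?_
    have hlen : r = k + 1 + (r - 1 - k) ↔ True := iff_true_intro (by simp at hk; omega)
    simp only [hvi, hlen, true_and, smul_eq_mul, mul_ite, mul_one, mul_zero]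
  · rw [Finset.sum_eq_zero fun k _ => by simp [hvi]]
    split_ifs with h
    · -- `i = v - 1` without `v = i + 1` only happens through truncated subtraction at `v = 0`
      obtain rfl : v = 0 := by omega
      simp
    · rfl

/-- In the free associative algebra over a field of characteristic `p` on
`x, y`, with `t` a central variable, the coefficient of the monomial
`η = y x^{a_1} y ⋯ y x^{a_v}` (where `a_i ≥ 0`, `Σ a_i = r - v`) in
`Σ_{k=0}^{r-1} (-1)^k C(r-1,k) (x+ty)^k y (x+ty)^{r-1-k}` equals
`t^{v-1} · Σ_{j=0}^{v-1} (-1)^{K_j} C(r-1, K_j)` with `K_j = j + Σ_{i≤j} a_i`;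
i.e. the `η`-coefficient of the `t^i`-coefficient is the displayed sum if
`i = v - 1` and `0` otherwise. -/
theorem stmt_7 (p : ℕ) (hp : p.Prime) (F : Type*) [Field F] [CharP F p]
    (r : ℕ) (hpr : p ∣ r) (v : ℕ) (hv1 : 1 ≤ v) (hv2 : v ≤ r / 2)
    (a : Fin v → ℕ) (ha : ∑ i, a i = r - v) (i : ℕ) :
    MonoidAlgebra.coeff ((FreeAlgebra.equivMonoidAlgebraFreeMonoid (R := F) (X := Fin 2))
        ((∑ k ∈ Finset.range r,
            ((-1 : F) ^ k * (Nat.choose (r - 1) k : F)) •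
              ((C (FreeAlgebra.ι F (0 : Fin 2)) + X * C (FreeAlgebra.ι F (1 : Fin 2))) ^ k *
                C (FreeAlgebra.ι F (1 : Fin 2)) *
                (C (FreeAlgebra.ι F (0 : Fin 2)) + X * C (FreeAlgebra.ι F (1 : Fin 2))) ^
                  (r - 1 - k))).coeff i))
        (etaWord v a) =
      if i = v - 1 then
        ∑ j ∈ Finset.range v,
          (-1 : F) ^ (Kexp v a j) * (Nat.choose (r - 1) (Kexp v a j) : F)
      else 0 :=
  stmt_7_general F r v hv2 a ha i
end
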